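/- arXiv:1902.07115 — 2 statements merged into one kernel-verified Lean document; each statement's English description precedes it below -/
import Mathlib

section
/- For an i.i.d. sample of size n from a finite discrete distribution {p_k}, the expected missing mass E[π₀] = ∑_k p_k (1−p_k)^n and the expectation of Turing's estimator E[T₁] = E[N₁/n] = ∑_k p_k (1−p_k)^{n−1} satisfy 0 ≤ E[T₁] − E[π₀] = ∑_k p_k^2 (1−p_k)^{n−1} ≤ 1/n. -/
open Finset

lemma binom_term_le_one (x : ℝ) (hx : 0 ≤ x) (hx1 : x ≤ 1) (n : ℕ) (hn : 1 ≤ n) :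
    (n : ℝ) * (x * (1 - x) ^ (n - 1)) ≤ 1 := by
  have h1x : 0 ≤ 1 - x := by linarith
  have hpow := add_pow x (1 - x) n
  have hone : ((x + (1 - x)) : ℝ) ^ n = 1 := by norm_num
  have hsum : ∑ i ∈ range (n + 1), x ^ i * (1 - x) ^ (n - i) * (n.choose i : ℝ) = 1 := by
    rw [← hpow, hone]
  have hmem : 1 ∈ range (n + 1) :=
    Finset.mem_range.mpr (Nat.lt_succ_of_le hn)
  have hle : x ^ 1 * (1 - x) ^ (n - 1) * (n.choose 1 : ℝ) ≤
      ∑ i ∈ range (n + 1), x ^ i * (1 - x) ^ (n - i) * (n.choose i : ℝ) :=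
    Finset.single_le_sum (f := fun i => x ^ i * (1 - x) ^ (n - i) * (n.choose i : ℝ))
      (fun i _ => by positivity) hmem
  rw [hsum] at hle
  simpa [Nat.choose_one_right, mul_comm, mul_assoc, mul_left_comm] using hle

/-- 0 ≤ E[T₁] − E[π₀] = ∑_k p_k² (1−p_k)^{n−1} ≤ 1/n for Turing's estimator
of the missing mass, where E[π₀] = ∑_k p_k(1−p_k)^n and
E[T₁] = ∑_k p_k(1−p_k)^{n−1}. -/
theorem turing_estimator_bias {K : Type*} [Fintype K]
    (p : K → ℝ) (hp : ∀ k, 0 ≤ p k) (hsum : ∑ k, p k = 1)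
    (n : ℕ) (hn : 1 ≤ n) :
    0 ≤ (∑ k, p k * (1 - p k) ^ (n - 1)) - ∑ k, p k * (1 - p k) ^ n ∧
    (∑ k, p k * (1 - p k) ^ (n - 1)) - (∑ k, p k * (1 - p k) ^ n)
      = ∑ k, (p k) ^ 2 * (1 - p k) ^ (n - 1) ∧
    ∑ k, (p k) ^ 2 * (1 - p k) ^ (n - 1) ≤ 1 / (n : ℝ) := by
  have hle1 : ∀ k, p k ≤ 1 := by
    intro k
    rw [← hsum]
    exact Finset.single_le_sum (fun i _ => hp i) (Finset.mem_univ k)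
  have hn' : (0 : ℝ) < n := by exact_mod_cast hn
  have heq : (∑ k, p k * (1 - p k) ^ (n - 1)) - (∑ k, p k * (1 - p k) ^ n)
      = ∑ k, (p k) ^ 2 * (1 - p k) ^ (n - 1) := by
    rw [← Finset.sum_sub_distrib]
    apply Finset.sum_congr rfl
    intro k _
    have : (1 - p k) ^ n = (1 - p k) ^ (n - 1) * (1 - p k) := by
      rw [← pow_succ, Nat.sub_add_cancel hn]
    rw [this]; ring
  have hnonneg : 0 ≤ ∑ k, (p k) ^ 2 * (1 - p k) ^ (n - 1) := by
    apply Finset.sum_nonneg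
    intro k _
    have := hp k; have := hle1 k
    have : 0 ≤ 1 - p k := by linarith
    positivity
  refine ⟨by rw [heq]; exact hnonneg, heq, ?_⟩
  have hbound : ∀ k, (p k) ^ 2 * (1 - p k) ^ (n - 1) ≤ p k * (1 / n) := by
    intro k
    have h := binom_term_le_one (p k) (hp k) (hle1 k) n hn
    have : p k * (1 - p k) ^ (n - 1) ≤ 1 / n := by
      rw [le_div_iff₀ hn']
      linarith [h]
    calc (p k) ^ 2 * (1 - p k) ^ (n - 1) = p k * (p k * (1 - p k) ^ (n - 1)) := by ring
      _ ≤ p k * (1 / n) := by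
          apply mul_le_mul_of_nonneg_left this (hp k)
  calc ∑ k, (p k) ^ 2 * (1 - p k) ^ (n - 1) ≤ ∑ k, p k * (1 / n) :=
        Finset.sum_le_sum (fun k _ => hbound k)
    _ = 1 / n := by rw [← Finset.sum_mul, hsum, one_mul]
end

section
/- The entropy estimator Ĥ_z can be written as Ĥ_z = ∑_k p̂_k ∑_{v=1}^{n−f_k} (1/v) ∏_{j=0}^{v−1} (n − f_k − j)/(n − 1 − j), where f_k = n p̂_k, and each inner product term lies in [0,1]; consequently Ĥ_z ≥ 0. -/
/-!
Since `n! = n (n-1)!` and `(n-1)! = (n-1-v)! ∏_{j<v} (n-1-j)`, the coefficient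
`n^{1+v} (n-1-v)! / n!` equals `n^v / ∏_{j<v} (n-1-j)`; its `n^v` clears the denominators of
`∏_{j<v} (1 - p̂_k - j/n)`, leaving `∏_{j<v} (n-f_k-j)/(n-1-j)`. For `v > n - f_k` the factor
`j = n - f_k` vanishes, so only `v ≤ n - f_k` contributes, and there `0 ≤ n-f_k-j ≤ n-1-j`
because `f_k ≥ 1`.
-/

open Finset

theorem prod_range_sub_mul_factorial {R : Type*} [CommRing R] {m v : ℕ} (hv : v ≤ m) :
    (∏ j ∈ range v, ((m : R) - j)) * ((m - v).factorial : R) = m.factorial := by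
  rw [← Nat.factorial_mul_descFactorial hv, Nat.descFactorial_eq_prod_range, mul_comm,
    Nat.cast_mul, Nat.cast_prod]
  congr 1
  refine prod_congr rfl fun j hj => ?_
  rw [Nat.cast_sub (by grind)]

theorem pow_mul_factorial_div_factorial {n v : ℕ} (hv : v < n) :
    (n : ℝ) ^ (1 + v) * ((n - (1 + v)).factorial : ℝ) / n.factorial
      = (n : ℝ) ^ v / ∏ j ∈ range v, ((n : ℝ) - 1 - j) := by
  have hn : (n : ℝ) ≠ 0 := Nat.cast_ne_zero.2 (by omega)
  have hprod : ∏ j ∈ range v, ((n : ℝ) - 1 - j) ≠ 0 :=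
    prod_ne_zero_iff.2 fun j hj => by
      have : (j : ℝ) + 1 < n := by exact_mod_cast (by grind : j + 1 < n)
      linarith
  have hfac : (∏ j ∈ range v, ((n : ℝ) - 1 - j)) * ((n - (1 + v)).factorial : ℝ)
      = (n - 1).factorial := by
    rw [← prod_range_sub_mul_factorial (by omega : v ≤ n - 1), Nat.sub_add_eq,
      Nat.cast_pred (by omega)]
  rw [← Nat.mul_factorial_pred (by omega : n ≠ 0), Nat.cast_mul, ← hfac]
  field_simp
  ring

theorem pow_mul_factorial_div_factorial_mul_prod {n v : ℕ} (hv : v < n) (x : ℝ) :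
    (n : ℝ) ^ (1 + v) * ((n - (1 + v)).factorial : ℝ) / n.factorial *
        ∏ j ∈ range v, (1 - x / n - j / n)
      = ∏ j ∈ range v, (((n : ℝ) - x - j) / ((n : ℝ) - 1 - j)) := by
  have hn : (n : ℝ) ≠ 0 := Nat.cast_ne_zero.2 (by omega)
  have hscale :
      ∏ j ∈ range v, (1 - x / n - j / n) = ∏ j ∈ range v, (((n : ℝ) - x - j) / n) :=
    prod_congr rfl fun j _ => by field_simp
  rw [pow_mul_factorial_div_factorial hv, hscale, prod_div_distrib, prod_div_distrib,
    prod_const, card_range]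
  field_simp

theorem prod_one_sub_div_sub_div_eq_zero {n f v : ℕ} (hf : f ≤ n) (hn : n ≠ 0)
    (hv : n - f < v) :
    ∏ j ∈ range v, (1 - (f : ℝ) / n - j / n) = 0 :=
  prod_eq_zero (mem_range.2 hv) (by
    rw [Nat.cast_sub hf]
    field_simp
    ring)

theorem prod_sub_div_sub_mem_Icc {n f v : ℕ} (hf : 1 ≤ f) (hv : v ≤ n - f) :
    ∏ j ∈ range v, (((n : ℝ) - f - j) / ((n : ℝ) - 1 - j)) ∈ Set.Icc 0 1 := by
  have hfactor : ∀ j ∈ range v, ((n : ℝ) - f - j) / ((n : ℝ) - 1 - j) ∈ Set.Icc 0 1 := by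
    intro j hj
    have hjf : (j : ℝ) + f + 1 ≤ n := by exact_mod_cast (by grind : j + f + 1 ≤ n)
    have hf' : (1 : ℝ) ≤ f := by exact_mod_cast hf
    have hden : 0 < (n : ℝ) - 1 - j := by linarith
    exact ⟨div_nonneg (by linarith) hden.le, div_le_one_of_le₀ (by linarith) hden.le⟩
  exact ⟨prod_nonneg fun j hj => (hfactor j hj).1,
    prod_le_one (fun j hj => (hfactor j hj).1) fun j hj => (hfactor j hj).2⟩

theorem sum_Icc_pred_eq_sum_Icc_sub {n f : ℕ} (hf : 1 ≤ f) (hfn : f ≤ n) :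
    ∑ v ∈ Icc 1 (n - 1), (1 / (v : ℝ)) *
        ((n : ℝ) ^ (1 + v) * ((n - (1 + v)).factorial : ℝ) / n.factorial) *
        ((f : ℝ) / n * ∏ j ∈ range v, (1 - (f : ℝ) / n - (j : ℝ) / n))
      = (f : ℝ) / n * ∑ v ∈ Icc 1 (n - f), (1 / (v : ℝ)) *
          ∏ j ∈ range v, (((n : ℝ) - f - j) / ((n : ℝ) - 1 - j)) := by
  have hsub : Icc 1 (n - f) ⊆ Icc 1 (n - 1) := Icc_subset_Icc_right (by omega)
  rw [← sum_subset hsub fun v hv hv' => ?_, mul_sum]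
  · refine sum_congr rfl fun v hv => ?_
    rw [← pow_mul_factorial_div_factorial_mul_prod (by grind) (f : ℝ)]
    ring
  · rw [prod_one_sub_div_sub_div_eq_zero hfn (by omega) (by grind)]
    ring

theorem hz_rewrite_and_nonneg_general {K : Type*} [Fintype K]
    (n : ℕ) (f : K → ℕ) (hf : ∑ k, f k = n) (hfpos : ∀ k, 1 ≤ f k) :
    (∑ v ∈ Finset.Icc 1 (n - 1), (1 / (v : ℝ)) *
        ((n : ℝ) ^ (1 + v) * (Nat.factorial (n - (1 + v)) : ℝ) / (Nat.factorial n : ℝ)) *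
        ∑ k, ((f k : ℝ) / n) * ∏ j ∈ Finset.range v, (1 - (f k : ℝ) / n - (j : ℝ) / n))
      = ∑ k, ((f k : ℝ) / n) * ∑ v ∈ Finset.Icc 1 (n - f k), (1 / (v : ℝ)) *
          ∏ j ∈ Finset.range v, (((n : ℝ) - f k - j) / ((n : ℝ) - 1 - j)) ∧
    (∀ k, ∀ v ∈ Finset.Icc 1 (n - f k),
        (∏ j ∈ Finset.range v, (((n : ℝ) - f k - j) / ((n : ℝ) - 1 - j)))
          ∈ Set.Icc (0 : ℝ) 1) ∧
    0 ≤ ∑ v ∈ Finset.Icc 1 (n - 1), (1 / (v : ℝ)) *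
        ((n : ℝ) ^ (1 + v) * (Nat.factorial (n - (1 + v)) : ℝ) / (Nat.factorial n : ℝ)) *
        ∑ k, ((f k : ℝ) / n) * ∏ j ∈ Finset.range v, (1 - (f k : ℝ) / n - (j : ℝ) / n) := by
  have hfle : ∀ k, f k ≤ n := fun k => hf ▸ single_le_sum (fun _ _ => Nat.zero_le _) (mem_univ k)
  have hmem : ∀ k, ∀ v ∈ Icc 1 (n - f k),
      ∏ j ∈ range v, (((n : ℝ) - f k - j) / ((n : ℝ) - 1 - j)) ∈ Set.Icc (0 : ℝ) 1 :=
    fun k v hv => prod_sub_div_sub_mem_Icc (hfpos k) (mem_Icc.1 hv).2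
  have hrewrite : ∑ v ∈ Icc 1 (n - 1), (1 / (v : ℝ)) *
        ((n : ℝ) ^ (1 + v) * ((n - (1 + v)).factorial : ℝ) / n.factorial) *
        ∑ k, ((f k : ℝ) / n) * ∏ j ∈ range v, (1 - (f k : ℝ) / n - (j : ℝ) / n)
      = ∑ k, ((f k : ℝ) / n) * ∑ v ∈ Icc 1 (n - f k), (1 / (v : ℝ)) *
          ∏ j ∈ range v, (((n : ℝ) - f k - j) / ((n : ℝ) - 1 - j)) := by
    conv_lhs => simp only [mul_sum]
    rw [sum_comm]
    exact sum_congr rfl fun k _ => sum_Icc_pred_eq_sum_Icc_sub (hfpos k) (hfle k)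
  refine ⟨hrewrite, hmem, hrewrite ▸ sum_nonneg fun k _ => ?_⟩
  exact mul_nonneg (by positivity)
    (sum_nonneg fun v hv => mul_nonneg (by positivity) (hmem k v hv).1)

/-- Ĥ_z rewrites as ∑_k p̂_k ∑_{v=1}^{n−f_k} (1/v) ∏_{j=0}^{v−1} (n−f_k−j)/(n−1−j),
each inner product lies in [0,1], and consequently Ĥ_z ≥ 0. -/
theorem hz_rewrite_and_nonneg {K : Type*} [Fintype K]
    (n : ℕ) (hn : 2 ≤ n) (f : K → ℕ) (hf : ∑ k, f k = n) (hfpos : ∀ k, 1 ≤ f k) :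
    (∑ v ∈ Finset.Icc 1 (n - 1), (1 / (v : ℝ)) *
        ((n : ℝ) ^ (1 + v) * (Nat.factorial (n - (1 + v)) : ℝ) / (Nat.factorial n : ℝ)) *
        ∑ k, ((f k : ℝ) / n) * ∏ j ∈ Finset.range v, (1 - (f k : ℝ) / n - (j : ℝ) / n))
      = ∑ k, ((f k : ℝ) / n) * ∑ v ∈ Finset.Icc 1 (n - f k), (1 / (v : ℝ)) *
          ∏ j ∈ Finset.range v, (((n : ℝ) - f k - j) / ((n : ℝ) - 1 - j)) ∧
    (∀ k, ∀ v ∈ Finset.Icc 1 (n - f k),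
        (∏ j ∈ Finset.range v, (((n : ℝ) - f k - j) / ((n : ℝ) - 1 - j)))
          ∈ Set.Icc (0 : ℝ) 1) ∧
    0 ≤ ∑ v ∈ Finset.Icc 1 (n - 1), (1 / (v : ℝ)) *
        ((n : ℝ) ^ (1 + v) * (Nat.factorial (n - (1 + v)) : ℝ) / (Nat.factorial n : ℝ)) *
        ∑ k, ((f k : ℝ) / n) * ∏ j ∈ Finset.range v, (1 - (f k : ℝ) / n - (j : ℝ) / n) :=
  hz_rewrite_and_nonneg_general n f hf hfpos
end
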